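/- For bi-periodic Fibonacci polynomials and m, n ≥ 1 with m + n even, q_{m+n}(x) = q_m(x) q_{n+1}(x) + q_{m−1}(x) q_n(x). -/

import Mathlib

/-! The coefficient of the recurrence depends only on the parity of the index. Induct on `m`,
moving one unit from `n` to `m`: the parity of `m + n` is preserved, and it forces the two
recurrence coefficients that appear in the step to coincide. -/

/-- Bi-periodic Fibonacci polynomials (evaluated at x): q 0 = 0, q 1 = 1,
    q n = a*x*q (n-1) + q (n-2) if n odd, q n = b*x*q (n-1) + q (n-2) if n even. -/
def bpFibP (a b x : ℝ) : ℕ → ℝ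
  | 0 => 0
  | 1 => 1
  | n + 2 => (if Even (n + 2) then b * x else a * x) * bpFibP a b x (n + 1) + bpFibP a b x n

def bpCoeff (a b x : ℝ) (k : ℕ) : ℝ :=
  if Even k then b * x else a * x

section

variable (a b x : ℝ)

theorem bpFibP_add_two (k : ℕ) :
    bpFibP a b x (k + 2) = bpCoeff a b x (k + 2) * bpFibP a b x (k + 1) + bpFibP a b x k :=
  rfl

theorem bpCoeff_eq_of_even_add {m n : ℕ} (h : Even (m + n)) : bpCoeff a b x m = bpCoeff a b x n := by
  simp only [bpCoeff, Nat.even_add.mp h]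

theorem bpFibP_succ_add (m n : ℕ) (h : Even (m + 1 + n)) :
    bpFibP a b x (m + 1 + n) =
      bpFibP a b x (m + 1) * bpFibP a b x (n + 1) + bpFibP a b x m * bpFibP a b x n := by
  induction m generalizing n with
  | zero => simp [bpFibP, add_comm]
  | succ m ih =>
    have hshift : m + 1 + 1 + n = m + 1 + (n + 1) := by omega
    have hcoeff : bpCoeff a b x (n + 2) = bpCoeff a b x (m + 2) := by
      apply bpCoeff_eq_of_even_add
      rw [show n + 2 + (m + 2) = m + 1 + 1 + n + 2 by omega]
      exact h.add even_two
    rw [hshift, ih (n + 1) (by rwa [← hshift]), bpFibP_add_two a b x n,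
      bpFibP_add_two a b x m, hcoeff]
    ring

end

theorem bpFibP_add_even' (a b x : ℝ) (m n : ℕ)
    (hm : 1 ≤ m) (h : Even (m + n)) :
    bpFibP a b x (m + n) =
      bpFibP a b x m * bpFibP a b x (n + 1) + bpFibP a b x (m - 1) * bpFibP a b x n := by
  obtain ⟨k, rfl⟩ := Nat.exists_eq_add_of_le' hm
  exact bpFibP_succ_add a b x k n h
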